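/- arXiv:1604.04390 — 2 statements merged into one kernel-verified Lean document; each statement's English description precedes it below -/
import Mathlib

section
/- Let σ : S → A be a pre-strategy and x ∈ C(S). There is a unique x* ⊆ x with x* ∈ C(S) such that the pair (x*, σx) corresponds (via Ψ) to a configuration of CC_A ⊛ S and all maximal events of this configuration are visible. (Explicitly, x* = [x⁺], the down-closure in S of the set of positive events of x.) -/
/-- An event structure presented as raw data: a set of events, a causality
relation and a consistency predicate on (finite) sets of events. -/
structure ES where
  Evt : Type
  le : Evt → Evt → Prop
  Con : Set (Set Evt)

namespace ES

/-- Strict causality. -/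
def lt (E : ES) (a b : E.Evt) : Prop := E.le a b ∧ a ≠ b

/-- The axioms of event structures: `le` is a partial order, causes `[e]` are
finite, consistency is a nonempty collection of finite sets, closed under
subsets, containing all singletons, and closed under adding causal
dependencies. -/
def IsES (E : ES) : Prop :=
  (∀ e, E.le e e) ∧
  (∀ a b c, E.le a b → E.le b c → E.le a c) ∧
  (∀ a b, E.le a b → E.le b a → a = b) ∧
  (∀ e, {e' | E.le e' e}.Finite) ∧
  E.Con.Nonempty ∧
  (∀ X ∈ E.Con, X.Finite) ∧
  (∀ e, ({e} : Set E.Evt) ∈ E.Con) ∧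
  (∀ X ∈ E.Con, ∀ Y, Y ⊆ X → Y ∈ E.Con) ∧
  (∀ X ∈ E.Con, ∀ e ∈ X, ∀ e', E.le e' e → insert e' X ∈ E.Con)

/-- A (finite) configuration: a finite, consistent and down-closed set of events. -/
def Config (E : ES) (x : Set E.Evt) : Prop :=
  x.Finite ∧ (∀ Y, Y ⊆ x → Y.Finite → Y ∈ E.Con) ∧
  ∀ e ∈ x, ∀ e', E.le e' e → e' ∈ x

/-- Immediate causality `e ⇢ e'`. -/
def imc (E : ES) (a b : E.Evt) : Prop :=
  E.lt a b ∧ ∀ c, E.le a c → E.le c b → c = a ∨ c = b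

/-- Simple parallel composition of event structures. -/
def par (E F : ES) : ES where
  Evt := E.Evt ⊕ F.Evt
  le := fun p q =>
    match p, q with
    | Sum.inl a, Sum.inl b => E.le a b
    | Sum.inr a, Sum.inr b => F.le a b
    | _, _ => False
  Con := {X | Sum.inl ⁻¹' X ∈ E.Con ∧ Sum.inr ⁻¹' X ∈ F.Con}

/-- Projection (hiding): restrict an event structure to a subset `V` of events. -/
def proj (E : ES) (V : Set E.Evt) : ES where
  Evt := ↥V
  le := fun a b => E.le a.val b.val
  Con := {X | Subtype.val '' X ∈ E.Con}

end ES

/-- A (total) map of event structures: preserves configurations and is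
injective on each configuration. -/
def IsMap (E F : ES) (f : E.Evt → F.Evt) : Prop :=
  (∀ x, E.Config x → F.Config (f '' x)) ∧ ∀ x, E.Config x → Set.InjOn f x
/-- An event structure with polarities (`true` = positive/Player,
`false` = negative/Opponent). -/
structure ESP extends ES where
  pol : Evt → Bool

namespace ESP

/-- The dual game: polarities reversed. -/
def dual (A : ESP) : ESP where
  toES := A.toES
  pol := fun a => !A.pol a

/-- Simple parallel composition of games. -/
def par (A B : ESP) : ESP where
  toES := A.toES.par B.toES
  pol := Sum.elim A.pol B.pol

end ESP

/-- A pre-strategy on the game `A`: a polarity-preserving map of event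
structures `σ : S → A`. -/
def IsPreStrategy (S A : ESP) (σ : S.Evt → A.Evt) : Prop :=
  IsMap S.toES A.toES σ ∧ ∀ s, A.pol (σ s) = S.pol s

/-- `polExt pol b x y` means `x ⊆ y` and all events of `y \ x` have polarity `b`;
so `polExt pol true x y` is `x ⊆⁺ y` and `polExt pol false x y` is `x ⊆⁻ y`. -/
def polExt {α : Type} (pol : α → Bool) (b : Bool) (x y : Set α) : Prop :=
  x ⊆ y ∧ ∀ a ∈ y, a ∉ x → pol a = b

/-- The Scott order: `x ⊑ y` iff `x ⊇⁻ (x ∩ y) ⊆⁺ y`. -/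
def scottLE {α : Type} (pol : α → Bool) (x y : Set α) : Prop :=
  polExt pol false (x ∩ y) x ∧ polExt pol true (x ∩ y) y

/-- Courtesy: immediate causal links other than `− ⇢ +` are sent to immediate
causal links of the game. -/
def Courteous (S A : ESP) (σ : S.Evt → A.Evt) : Prop :=
  ∀ s s', S.toES.imc s s' → (S.pol s, S.pol s') ≠ (false, true) →
    A.toES.imc (σ s) (σ s')

/-- Receptivity: every negative extension of `σ x` in the game is matched by a
unique extension of `x`. -/
def Receptive (S A : ESP) (σ : S.Evt → A.Evt) : Prop :=
  ∀ x, S.toES.Config x → ∀ a, A.pol a = false → a ∉ σ '' x →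
    A.toES.Config (insert a (σ '' x)) →
    ∃! s, s ∉ x ∧ S.toES.Config (insert s x) ∧ σ s = a
/-- The generating relation of copycat causality on `A^⊥ ∥ A`:
the causality of `A^⊥ ∥ A` together with the links from each negative
occurrence to the corresponding positive occurrence on the other side. -/
def ccGen (A : ESP) : (A.Evt ⊕ A.Evt) → (A.Evt ⊕ A.Evt) → Prop :=
  fun p q => (A.dual.par A).le p q ∨
    (∃ a, A.pol a = true ∧ p = Sum.inl a ∧ q = Sum.inr a) ∨
    (∃ a, A.pol a = false ∧ p = Sum.inr a ∧ q = Sum.inl a)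

/-- The copycat structure `CC_A` on the game `A`. -/
def CC (A : ESP) : ESP where
  Evt := A.Evt ⊕ A.Evt
  le := Relation.ReflTransGen (ccGen A)
  Con := {X | {e | ∃ e' ∈ X, Relation.ReflTransGen (ccGen A) e e'} ∈ (A.dual.par A).Con}
  pol := (A.dual.par A).pol
/-- The relation `◁` generating the order on the graph `G` of a bijection:
`p ◁ q` when both are in `G` and `p.1 <_S q.1` or `p.2 <_T q.2`. -/
def gRel (S T : ES) (G : Set (S.Evt × T.Evt)) :
    (S.Evt × T.Evt) → (S.Evt × T.Evt) → Prop :=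
  fun p q => p ∈ G ∧ q ∈ G ∧ (S.lt p.1 q.1 ∨ T.lt p.2 q.2)

/-- The graph `G` is secured: the reflexive-transitive closure of `◁` on `G`
is antisymmetric (hence a partial order). -/
def SecuredOn (S T : ES) (G : Set (S.Evt × T.Evt)) : Prop :=
  ∀ p q, Relation.ReflTransGen (gRel S T G) p q →
    Relation.ReflTransGen (gRel S T G) q p → p = q

/-- `G` is (the graph of) a secured bijection `φ : x ≃ σ x = τ y ≃ y` between
configurations `x ∈ C(S)` and `y ∈ C(T)`, an element of `SB(σ, τ)`. -/
def IsSecBij (S T A : ES) (σ : S.Evt → A.Evt) (τ : T.Evt → A.Evt)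
    (G : Set (S.Evt × T.Evt)) : Prop :=
  S.Config (Prod.fst '' G) ∧ T.Config (Prod.snd '' G) ∧
  (∀ p ∈ G, σ p.1 = τ p.2) ∧
  (∀ s ∈ Prod.fst '' G, ∀ t ∈ Prod.snd '' G, σ s = τ t → (s, t) ∈ G) ∧
  σ '' (Prod.fst '' G) = τ '' (Prod.snd '' G) ∧
  SecuredOn S T G

/-- `G` has a top (greatest) element for the induced order. -/
def IsPrime (S T : ES) (G : Set (S.Evt × T.Evt)) : Prop :=
  ∃ p ∈ G, ∀ q ∈ G, Relation.ReflTransGen (gRel S T G) q p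

/-- The interaction `S ∧ T` of `σ : S → A` and `τ : T → A`: events are the
prime secured bijections, causality is inclusion of graphs, and a finite set
of events is consistent when the union of their graphs is a secured bijection. -/
def Interaction (S T A : ES) (σ : S.Evt → A.Evt) (τ : T.Evt → A.Evt) : ES where
  Evt := {G : Set (S.Evt × T.Evt) // IsSecBij S T A σ τ G ∧ IsPrime S T G}
  le := fun G G' => G.val ⊆ G'.val
  Con := {X | X.Finite ∧ IsSecBij S T A σ τ (⋃ G ∈ X, G.val)}
/-- The interaction `CC_A ⊛ S`: the pullback of `σ ∥ id_A : S ∥ A → A ∥ A`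
and `ccc_A = id : CC_A → A ∥ A` (polarities ignored). -/
def ccInterES (A S : ESP) (σ : S.Evt → A.Evt) : ES :=
  Interaction (S.toES.par A.toES) (CC A).toES (A.toES.par A.toES)
    (Sum.map σ id) id

/-- The graph of the bijection `x ∥ y ≃ σ x ∥ y` determined by a pair of
configurations `(x, y) ∈ C(S) × C(A)` (the secured bijection `Ψ⁻¹(x, y)`). -/
def ccGraph (A S : ESP) (σ : S.Evt → A.Evt) (xS : Set S.Evt) (xA : Set A.Evt) :
    Set ((S.Evt ⊕ A.Evt) × (A.Evt ⊕ A.Evt)) :=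
  {p | p.1 ∈ Sum.inl '' xS ∪ Sum.inr '' xA ∧ p.2 = Sum.map σ id p.1}

/-- All maximal events of the graph `G` (for its induced order) are visible,
i.e. project to the right-hand copy of `A`. -/
def MaxVis (A S : ESP) (σ : S.Evt → A.Evt)
    (G : Set ((S.Evt ⊕ A.Evt) × (A.Evt ⊕ A.Evt))) : Prop :=
  ∀ p ∈ G, (∀ q ∈ G, Relation.ReflTransGen
      (gRel (S.toES.par A.toES) (CC A).toES G) p q → q = p) →
    ∃ a : A.Evt, p.1 = Sum.inr a


/-!
The graph of `(x', σ x)` is secured because copycat events over `σ x` carry a rank that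
strictly increases along every generating step `◁`: an event lying over `a ∈ σ x` is ranked by
the size of the down-closure in `x` of the events mapped below `a`, with a tie-break recording
which of the two copies of `a` copycat plays first.

For the minimal witness, `[x⁺] ⊆ x'` because copycat makes the right-hand copy of a positive
event depend on its left-hand copy. Conversely, from an event of `x' \ [x⁺]` the generating steps
lead only to events of `x' \ [x⁺]` (crossing to the right-hand copy would pass through a
positive event of `σ x`), so one of maximal rank is a maximal invisible event.
-/

open Relation

section RankOrder

variable {α β : Type*} {r : α → α → Prop}

theorem Relation.TransGen.rank_lt [Preorder β] (f : α → β) (hf : ∀ a b, r a b → f a < f b)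
    {a b : α} (h : TransGen r a b) : f a < f b := by
  induction h with
  | single hab => exact hf _ _ hab
  | tail _ hbc ih => exact ih.trans (hf _ _ hbc)

theorem Relation.ReflTransGen.rank_le [Preorder β] (f : α → β) (hf : ∀ a b, r a b → f a < f b)
    {a b : α} (h : ReflTransGen r a b) : f a ≤ f b := by
  induction h with
  | refl => exact le_rfl
  | tail _ hbc ih => exact ih.trans (hf _ _ hbc).le

theorem Relation.ReflTransGen.antisymm_of_rank_lt [Preorder β] (f : α → β)
    (hf : ∀ a b, r a b → f a < f b) {a b : α} (hab : ReflTransGen r a b)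
    (hba : ReflTransGen r b a) : a = b := by
  rcases reflTransGen_iff_eq_or_transGen.1 hab with rfl | h
  · rfl
  · exact absurd ((h.rank_lt f hf).trans_le (hba.rank_le f hf)) (lt_irrefl _)

theorem exists_forall_reflTransGen_eq_of_rank_lt [LinearOrder β] (f : α → β)
    (hf : ∀ a b, r a b → f a < f b) {W : Set α} (hW : W.Finite) (hne : W.Nonempty)
    (hsucc : ∀ a ∈ W, ∀ b, r a b → b ∈ W) : ∃ a ∈ W, ∀ b, ReflTransGen r a b → b = a := by
  obtain ⟨a, ha, hmax⟩ := Set.exists_max_image W f hW hne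
  refine ⟨a, ha, fun b hab => ?_⟩
  rcases hab.cases_head with rfl | ⟨c, hac, -⟩
  · rfl
  · exact absurd (hmax c (hsucc a ha c hac)) (not_le.2 (hf a c hac))

end RankOrder

namespace ES

theorem IsES.le_refl {E : ES} (hE : E.IsES) (e : E.Evt) : E.le e e := hE.1 e

theorem IsES.le_trans {E : ES} (hE : E.IsES) {a b c : E.Evt} (hab : E.le a b)
    (hbc : E.le b c) : E.le a c :=
  hE.2.1 a b c hab hbc

theorem IsES.le_antisymm {E : ES} (hE : E.IsES) {a b : E.Evt} (hab : E.le a b)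
    (hba : E.le b a) : a = b :=
  hE.2.2.1 a b hab hba

theorem Config.of_subset {E : ES} {x y : Set E.Evt} (hx : E.Config x) (hyx : y ⊆ x)
    (hdown : ∀ e ∈ y, ∀ e', E.le e' e → e' ∈ y) : E.Config y :=
  ⟨hx.1.subset hyx, fun Y hY hYf => hx.2.1 Y (hY.trans hyx) hYf, hdown⟩

theorem Config.par {E F : ES} {x : Set E.Evt} {y : Set F.Evt} (hx : E.Config x)
    (hy : F.Config y) : (E.par F).Config (Sum.inl '' x ∪ Sum.inr '' y) := by
  refine ⟨(hx.1.image _).union (hy.1.image _), fun Y hY hYf => ⟨?_, ?_⟩, ?_⟩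
  · refine hx.2.1 _ (fun e he => ?_) (hYf.preimage Sum.inl_injective.injOn)
    rcases hY he with ⟨u, hu, h⟩ | ⟨u, -, h⟩
    exacts [Sum.inl_injective h ▸ hu, (Sum.inr_ne_inl h).elim]
  · refine hy.2.1 _ (fun e he => ?_) (hYf.preimage Sum.inr_injective.injOn)
    rcases hY he with ⟨u, -, h⟩ | ⟨u, hu, h⟩
    exacts [(Sum.inl_ne_inr h).elim, Sum.inr_injective h ▸ hu]
  · rintro _ (⟨u, hu, rfl⟩ | ⟨u, hu, rfl⟩) (v | v) hle
    · exact Or.inl ⟨v, hx.2.2 u hu v hle, rfl⟩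
    · exact hle.elim
    · exact hle.elim
    · exact Or.inr ⟨v, hy.2.2 u hu v hle, rfl⟩

end ES

theorem IsMap.le_of_map_le {E F : ES} {f : E.Evt → F.Evt} (hf : IsMap E F f) (hE : E.IsES)
    {x : Set E.Evt} (hx : E.Config x) {t t' : E.Evt} (ht : t ∈ x) (ht' : t' ∈ x)
    (h : F.le (f t) (f t')) : E.le t t' := by
  have hcause : E.Config {u | E.le u t'} :=
    hx.of_subset (fun u hu => hx.2.2 t' ht' u hu) fun _ he _ he' => hE.le_trans he' he
  obtain ⟨u, hut', hu⟩ := (hf.1 _ hcause).2.2 (f t') ⟨t', hE.le_refl t', rfl⟩ (f t) h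
  obtain rfl := hf.2 x hx (hx.2.2 t' ht' u hut') ht hu
  exact hut'

section Copycat

variable {A : ESP}

/-- Copycat causality: passing from the left-hand copy to the right-hand one goes through a
positive event, passing back through a negative one. -/
def ccLeChar (A : ESP) : A.Evt ⊕ A.Evt → A.Evt ⊕ A.Evt → Prop
  | Sum.inl a, Sum.inl b => A.le a b
  | Sum.inl a, Sum.inr b => ∃ c, A.pol c = true ∧ A.le a c ∧ A.le c b
  | Sum.inr a, Sum.inl b => ∃ c, A.pol c = false ∧ A.le a c ∧ A.le c b
  | Sum.inr a, Sum.inr b => A.le a b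

theorem ccLeChar_of_le (hA : A.toES.IsES) {p q : A.Evt ⊕ A.Evt} (h : (CC A).le p q) :
    ccLeChar A p q := by
  induction h with
  | refl => cases p <;> exact hA.le_refl _
  | @tail b c _ hstep ih =>
    rcases hstep with hle | ⟨a, ha, rfl, rfl⟩ | ⟨a, ha, rfl, rfl⟩
    · rcases p with p | p <;> rcases b with b | b <;> rcases c with c | c <;>
        simp only [ccLeChar, ESP.par, ESP.dual, ES.par] at ih hle ⊢
      all_goals first
        | exact hle.elim
        | exact hA.le_trans ih hle
        | exact ih.imp fun d hd => ⟨hd.1, hd.2.1, hA.le_trans hd.2.2 hle⟩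
    · rcases p with p | p
      · exact ⟨a, ha, ih, hA.le_refl a⟩
      · obtain ⟨d, -, hpd, hda⟩ := ih
        exact hA.le_trans hpd hda
    · rcases p with p | p
      · obtain ⟨d, -, hpd, hda⟩ := ih
        exact hA.le_trans hpd hda
      · exact ⟨a, ha, ih, hA.le_refl a⟩

theorem ccLeChar.base_le (hA : A.toES.IsES) {u v : A.Evt ⊕ A.Evt} (h : ccLeChar A u v) :
    A.le (Sum.elim id id u) (Sum.elim id id v) := by
  rcases u with a | a <;> rcases v with b | b
  · exact h
  · obtain ⟨c, -, hac, hcb⟩ := h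
    exact hA.le_trans hac hcb
  · obtain ⟨c, -, hac, hcb⟩ := h
    exact hA.le_trans hac hcb
  · exact h

theorem CC.config_of_subset (hA : A.toES.IsES) {y z : Set A.Evt} (hy : A.toES.Config y)
    (hz : A.toES.Config z) (hyz : y ⊆ z) (hpos : ∀ a ∈ z, A.pol a = true → a ∈ y) :
    (CC A).toES.Config (Sum.inl '' y ∪ Sum.inr '' z) := by
  have hdown : ∀ e ∈ Sum.inl '' y ∪ Sum.inr '' z, ∀ e', (CC A).le e' e →
      e' ∈ Sum.inl '' y ∪ Sum.inr '' z := by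
    rintro _ (⟨a, ha, rfl⟩ | ⟨a, ha, rfl⟩) (b | b) hle <;> have hchar := ccLeChar_of_le hA hle
    · exact Or.inl ⟨b, hy.2.2 a ha b hchar, rfl⟩
    · obtain ⟨c, -, hbc, hca⟩ := hchar
      exact Or.inr ⟨b, hz.2.2 c (hyz (hy.2.2 a ha c hca)) b hbc, rfl⟩
    · obtain ⟨c, hc, hbc, hca⟩ := hchar
      exact Or.inl ⟨b, hy.2.2 c (hpos c (hz.2.2 a ha c hca) hc) b hbc, rfl⟩
    · exact Or.inr ⟨b, hz.2.2 a ha b hchar, rfl⟩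
  have hpar : (A.dual.par A).toES.Config (Sum.inl '' y ∪ Sum.inr '' z) := hy.par hz
  have hcauses : ∀ Y ⊆ Sum.inl '' y ∪ Sum.inr '' z,
      {e | ∃ e' ∈ Y, (CC A).le e e'} ⊆ Sum.inl '' y ∪ Sum.inr '' z :=
    fun Y hY _ ⟨e', he', hle⟩ => hdown e' (hY he') _ hle
  exact ⟨hpar.1, fun Y hY _ => hpar.2.1 _ (hcauses Y hY) (hpar.1.subset (hcauses Y hY)), hdown⟩

end Copycat

section Rank

variable {A S : ESP} (σ : S.Evt → A.Evt) (x : Set S.Evt)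

def downPreimage (a : A.Evt) : Set S.Evt :=
  {u ∈ x | ∃ t ∈ x, S.le u t ∧ A.le (σ t) a}

/-- Of the two copies of `a`, the one copycat plays first (the left one when `a` is positive)
gets tag `0`. -/
def ccTag (A : ESP) : A.Evt ⊕ A.Evt → ℕ
  | Sum.inl a => if A.pol a then 0 else 1
  | Sum.inr a => if A.pol a then 1 else 0

noncomputable def ccRank (u : A.Evt ⊕ A.Evt) : ℕ :=
  2 * (downPreimage σ x (Sum.elim id id u)).ncard + ccTag A u

variable {σ x}

theorem downPreimage_mono (hA : A.toES.IsES) {a b : A.Evt} (hab : A.le a b) :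
    downPreimage σ x a ⊆ downPreimage σ x b :=
  fun _ ⟨hu, t, ht, hut, hta⟩ => ⟨hu, t, ht, hut, hA.le_trans hta hab⟩

theorem downPreimage_map (hA : A.toES.IsES) (hS : S.toES.IsES)
    (hσ : IsMap S.toES A.toES σ) (hx : S.toES.Config x) {s : S.Evt} (hs : s ∈ x) :
    downPreimage σ x (σ s) = {u ∈ x | S.le u s} := by
  ext u
  constructor
  · rintro ⟨hu, t, ht, hut, hts⟩
    exact ⟨hu, hS.le_trans hut (hσ.le_of_map_le hS hx ht hs hts)⟩
  · rintro ⟨hu, hus⟩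
    exact ⟨hu, s, hs, hus, hA.le_refl _⟩

theorem downPreimage_ssubset (hA : A.toES.IsES) (hS : S.toES.IsES)
    (hσ : IsMap S.toES A.toES σ) (hx : S.toES.Config x) {a b : A.Evt} (hab : A.lt a b)
    (hb : b ∈ σ '' x) : downPreimage σ x a ⊂ downPreimage σ x b := by
  obtain ⟨t, ht, rfl⟩ := hb
  refine (Set.ssubset_iff_of_subset (downPreimage_mono hA hab.1)).2
    ⟨t, ⟨ht, t, ht, hS.le_refl t, hA.le_refl _⟩, ?_⟩
  rintro ⟨-, t', ht', htt', ht'a⟩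
  obtain rfl := hS.le_antisymm htt' (hσ.le_of_map_le hS hx ht' ht (hA.le_trans ht'a hab.1))
  exact hab.2 (hA.le_antisymm hab.1 ht'a)

theorem ccTag_le_one (u : A.Evt ⊕ A.Evt) : ccTag A u ≤ 1 := by
  rcases u with a | a <;> simp only [ccTag] <;> split <;> omega

theorem ccRank_lt_of_base_lt (hA : A.toES.IsES) (hS : S.toES.IsES)
    (hσ : IsMap S.toES A.toES σ) (hx : S.toES.Config x) {u v : A.Evt ⊕ A.Evt}
    (hv : Sum.elim id id v ∈ σ '' x) (huv : A.lt (Sum.elim id id u) (Sum.elim id id v)) :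
    ccRank σ x u < ccRank σ x v := by
  have hlt := Set.ncard_lt_ncard (downPreimage_ssubset hA hS hσ hx huv hv)
    (hx.1.subset fun _ hu => hu.1)
  have := ccTag_le_one u
  unfold ccRank
  omega

theorem ccRank_lt_of_lt (hA : A.toES.IsES) (hS : S.toES.IsES) (hσ : IsMap S.toES A.toES σ)
    (hx : S.toES.Config x) {u v : A.Evt ⊕ A.Evt} (hv : Sum.elim id id v ∈ σ '' x)
    (huv : (CC A).lt u v) : ccRank σ x u < ccRank σ x v := by
  obtain ⟨hle, hne⟩ := huv
  have hchar := ccLeChar_of_le hA hle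
  by_cases hbase : Sum.elim id id u = Sum.elim id id v
  · rcases u with a | a <;> rcases v with b | b <;>
      simp only [Sum.elim_inl, Sum.elim_inr, id_eq] at hbase <;> subst hbase
    · exact absurd rfl hne
    · obtain ⟨c, hc, hac, hca⟩ := hchar
      obtain rfl := hA.le_antisymm hac hca
      simp [ccRank, ccTag, hc]
    · obtain ⟨c, hc, hac, hca⟩ := hchar
      obtain rfl := hA.le_antisymm hac hca
      simp [ccRank, ccTag, hc]
    · exact absurd rfl hne
  · exact ccRank_lt_of_base_lt hA hS hσ hx hv ⟨hchar.base_le hA, hbase⟩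

theorem ccRank_inl_lt (hA : A.toES.IsES) (hS : S.toES.IsES) (hσ : IsMap S.toES A.toES σ)
    (hx : S.toES.Config x) {s t : S.Evt} (hs : s ∈ x) (ht : t ∈ x) (hst : S.lt s t) :
    ccRank σ x (Sum.inl (σ s)) < ccRank σ x (Sum.inl (σ t)) := by
  have hsub : {u ∈ x | S.le u s} ⊂ {u ∈ x | S.le u t} := by
    refine (Set.ssubset_iff_of_subset ?_).2
      ⟨t, ⟨ht, hS.le_refl t⟩, fun h => hst.2 (hS.le_antisymm hst.1 h.2)⟩
    exact fun u hu => ⟨hu.1, hS.le_trans hu.2 hst.1⟩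
  have hlt := Set.ncard_lt_ncard hsub (hx.1.subset fun _ hu => hu.1)
  have := ccTag_le_one (Sum.inl (σ s) : A.Evt ⊕ A.Evt)
  simp only [ccRank, Sum.elim_inl, id_eq, downPreimage_map hA hS hσ hx hs,
    downPreimage_map hA hS hσ hx ht]
  omega

end Rank

section Graph

variable {A S : ESP} {σ : S.Evt → A.Evt}

theorem mem_ccGraph {xS : Set S.Evt} {xA : Set A.Evt}
    {p : (S.Evt ⊕ A.Evt) × (A.Evt ⊕ A.Evt)} :
    p ∈ ccGraph A S σ xS xA ↔
      (∃ s ∈ xS, p = (Sum.inl s, Sum.inl (σ s))) ∨ ∃ a ∈ xA, p = (Sum.inr a, Sum.inr a) := by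
  obtain ⟨p₁, p₂⟩ := p
  simp only [ccGraph, Set.mem_ofPred_eq, Set.mem_union, Set.mem_image, Prod.mk.injEq]
  constructor
  · rintro ⟨⟨s, hs, rfl⟩ | ⟨a, ha, rfl⟩, rfl⟩
    exacts [Or.inl ⟨s, hs, rfl, rfl⟩, Or.inr ⟨a, ha, rfl, rfl⟩]
  · rintro (⟨s, hs, rfl, rfl⟩ | ⟨a, ha, rfl, rfl⟩)
    exacts [⟨Or.inl ⟨s, hs, rfl⟩, rfl⟩, ⟨Or.inr ⟨a, ha, rfl⟩, rfl⟩]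

theorem snd_image_ccGraph (xS : Set S.Evt) (xA : Set A.Evt) :
    Prod.snd '' ccGraph A S σ xS xA = Sum.inl '' (σ '' xS) ∪ Sum.inr '' xA := by
  ext v
  simp only [Set.mem_image, mem_ccGraph, Set.mem_union]
  constructor
  · rintro ⟨_, ⟨s, hs, rfl⟩ | ⟨a, ha, rfl⟩, rfl⟩
    exacts [Or.inl ⟨σ s, ⟨s, hs, rfl⟩, rfl⟩, Or.inr ⟨a, ha, rfl⟩]
  · rintro (⟨_, ⟨s, hs, rfl⟩, rfl⟩ | ⟨a, ha, rfl⟩)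
    exacts [⟨_, Or.inl ⟨s, hs, rfl⟩, rfl⟩, ⟨_, Or.inr ⟨a, ha, rfl⟩, rfl⟩]

variable {x : Set S.Evt}

theorem ccRank_lt_of_gRel_ccGraph (hA : A.toES.IsES) (hS : S.toES.IsES)
    (hσ : IsMap S.toES A.toES σ) (hx : S.toES.Config x) {xS : Set S.Evt} (hxS : xS ⊆ x)
    {p q : (S.Evt ⊕ A.Evt) × (A.Evt ⊕ A.Evt)}
    (h : gRel (S.toES.par A.toES) (CC A).toES (ccGraph A S σ xS (σ '' x)) p q) :
    ccRank σ x p.2 < ccRank σ x q.2 := by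
  obtain ⟨hp, hq, hlt | hlt⟩ := h
  · rcases mem_ccGraph.1 hp with ⟨s, hs, rfl⟩ | ⟨a, -, rfl⟩ <;>
      rcases mem_ccGraph.1 hq with ⟨t, ht, rfl⟩ | ⟨b, hb, rfl⟩
    · exact ccRank_inl_lt hA hS hσ hx (hxS hs) (hxS ht) ⟨hlt.1, fun h => hlt.2 (congrArg Sum.inl h)⟩
    · exact hlt.1.elim
    · exact hlt.1.elim
    · exact ccRank_lt_of_base_lt hA hS hσ hx hb ⟨hlt.1, fun h => hlt.2 (congrArg Sum.inr h)⟩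
  · refine ccRank_lt_of_lt hA hS hσ hx ?_ hlt
    rcases mem_ccGraph.1 hq with ⟨t, ht, rfl⟩ | ⟨b, hb, rfl⟩
    exacts [⟨t, hxS ht, rfl⟩, hb]

theorem ccGraph_isSecBij (hA : A.toES.IsES) (hS : S.toES.IsES) (hσ : IsMap S.toES A.toES σ)
    (hx : S.toES.Config x) {x' : Set S.Evt} (hx'x : x' ⊆ x) (hx' : S.toES.Config x')
    (hpos : ∀ a ∈ σ '' x, A.pol a = true → a ∈ σ '' x') :
    IsSecBij (S.toES.par A.toES) (CC A).toES (A.toES.par A.toES) (Sum.map σ id) id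
      (ccGraph A S σ x' (σ '' x)) := by
  have hfst : Prod.fst '' ccGraph A S σ x' (σ '' x) = Sum.inl '' x' ∪ Sum.inr '' (σ '' x) :=
    Set.ext fun u =>
      ⟨fun ⟨_, hp, hpu⟩ => hpu ▸ hp.1, fun hu => ⟨(u, Sum.map σ id u), ⟨hu, rfl⟩, rfl⟩⟩
  refine ⟨hfst ▸ hx'.par (hσ.1 x hx), ?_, fun p hp => hp.2.symm, ?_, ?_, ?_⟩
  · erw [snd_image_ccGraph]
    exact CC.config_of_subset hA (hσ.1 x' hx') (hσ.1 x hx) (Set.image_mono hx'x) hpos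
  · rintro _ ⟨p, hp, rfl⟩ t - heq
    exact ⟨hp.1, heq.symm⟩
  · exact (Set.image_image _ _ _).trans
      ((Set.image_congr fun p hp => hp.2.symm).trans (Set.image_image _ _ _).symm)
  · exact fun p q => ReflTransGen.antisymm_of_rank_lt
      (r := gRel (S.toES.par A.toES) (CC A).toES (ccGraph A S σ x' (σ '' x)))
      (fun p => ccRank σ x p.2) fun _ _ => ccRank_lt_of_gRel_ccGraph hA hS hσ hx hx'x

end Graph

section Witness

variable {A S : ESP} {σ : S.Evt → A.Evt} {x : Set S.Evt}

def posDownClosure (S : ESP) (x : Set S.Evt) : Set S.Evt :=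
  {s | ∃ s' ∈ x, S.pol s' = true ∧ S.le s s'}

theorem posDownClosure_subset (hx : S.toES.Config x) : posDownClosure S x ⊆ x :=
  fun s ⟨s', hs', _, hss'⟩ => hx.2.2 s' hs' s hss'

theorem mem_posDownClosure_of_le (hS : S.toES.IsES) {s t : S.Evt}
    (ht : t ∈ posDownClosure S x) (hst : S.le s t) : s ∈ posDownClosure S x :=
  let ⟨t', ht', hpos, htt'⟩ := ht
  ⟨t', ht', hpos, hS.le_trans hst htt'⟩

theorem posDownClosure_config (hS : S.toES.IsES) (hx : S.toES.Config x) :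
    S.toES.Config (posDownClosure S x) :=
  hx.of_subset (posDownClosure_subset hx) fun _ he _ hle => mem_posDownClosure_of_le hS he hle

theorem pos_mem_image_posDownClosure (hS : S.toES.IsES) (hσ : IsPreStrategy S A σ) :
    ∀ a ∈ σ '' x, A.pol a = true → a ∈ σ '' posDownClosure S x := by
  rintro _ ⟨s, hs, rfl⟩ hpos
  exact ⟨s, ⟨s, hs, (hσ.2 s).symm.trans hpos, hS.le_refl s⟩, rfl⟩

theorem maxVis_ccGraph_posDownClosure (hS : S.toES.IsES) (hσ : IsPreStrategy S A σ) :
    MaxVis A S σ (ccGraph A S σ (posDownClosure S x) (σ '' x)) := by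
  intro p hp hmax
  rcases mem_ccGraph.1 hp with ⟨s, ⟨s', hs', hpos, hss'⟩, rfl⟩ | ⟨a, -, rfl⟩
  · exfalso
    obtain ⟨q, hq, hpq, hne⟩ : ∃ q ∈ ccGraph A S σ (posDownClosure S x) (σ '' x),
        gRel (S.toES.par A.toES) (CC A).toES (ccGraph A S σ (posDownClosure S x) (σ '' x))
          (Sum.inl s, Sum.inl (σ s)) q ∧ q ≠ (Sum.inl s, Sum.inl (σ s)) := by
      by_cases hs : s = s'
      · subst hs
        have hq : (Sum.inr (σ s), Sum.inr (σ s)) ∈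
            ccGraph A S σ (posDownClosure S x) (σ '' x) :=
          mem_ccGraph.2 (Or.inr ⟨σ s, ⟨s, hs', rfl⟩, rfl⟩)
        have hcc : (CC A).le (Sum.inl (σ s)) (Sum.inr (σ s)) :=
          .single (Or.inr (Or.inl ⟨σ s, (hσ.2 s).trans hpos, rfl, rfl⟩))
        exact ⟨_, hq, ⟨hp, hq, Or.inr ⟨hcc, Sum.inl_ne_inr⟩⟩, by simp⟩
      · have hq : (Sum.inl s', Sum.inl (σ s')) ∈
            ccGraph A S σ (posDownClosure S x) (σ '' x) :=
          mem_ccGraph.2 (Or.inl ⟨s', ⟨s', hs', hpos, hS.le_refl s'⟩, rfl⟩)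
        exact ⟨_, hq, ⟨hp, hq, Or.inl ⟨hss', fun h => hs (Sum.inl_injective h)⟩⟩,
          by simp [Ne.symm hs]⟩
    exact hne (hmax q hq (.single hpq))
  · exact ⟨a, rfl⟩

theorem posDownClosure_subset_of_isSecBij (hσ : IsPreStrategy S A σ) (hx : S.toES.Config x)
    {x' : Set S.Evt} (hx'x : x' ⊆ x) (hx' : S.toES.Config x')
    (hsec : IsSecBij (S.toES.par A.toES) (CC A).toES (A.toES.par A.toES) (Sum.map σ id) id
      (ccGraph A S σ x' (σ '' x))) :
    posDownClosure S x ⊆ x' := by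
  rintro s ⟨s', hs', hpos, hss'⟩
  have hcc := hsec.2.1
  erw [snd_image_ccGraph] at hcc
  have hcopy : (CC A).le (Sum.inl (σ s')) (Sum.inr (σ s')) :=
    .single (Or.inr (Or.inl ⟨σ s', (hσ.2 s').trans hpos, rfl, rfl⟩))
  obtain ⟨_, ⟨u, hu, rfl⟩, hus'⟩ | ⟨_, -, h⟩ :=
    hcc.2.2 _ (Or.inr ⟨σ s', ⟨s', hs', rfl⟩, rfl⟩) _ hcopy
  · obtain rfl := hσ.1.2 x hx (hx'x hu) hs' (Sum.inl_injective hus')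
    exact hx'.2.2 u hu s hss'
  · exact (Sum.inr_ne_inl h).elim

theorem exists_ccGraph_succ_of_notMem_posDownClosure (hA : A.toES.IsES) (hS : S.toES.IsES)
    (hσ : IsPreStrategy S A σ) (hx : S.toES.Config x) {x' : Set S.Evt} (hx'x : x' ⊆ x)
    {s : S.Evt} (hsx' : s ∈ x') (hs : s ∉ posDownClosure S x)
    {q : (S.Evt ⊕ A.Evt) × (A.Evt ⊕ A.Evt)}
    (h : gRel (S.toES.par A.toES) (CC A).toES (ccGraph A S σ x' (σ '' x))
      (Sum.inl s, Sum.inl (σ s)) q) :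
    ∃ t ∈ x' \ posDownClosure S x, q = (Sum.inl t, Sum.inl (σ t)) := by
  obtain ⟨-, hq, hlt⟩ := h
  rcases mem_ccGraph.1 hq with ⟨t, ht, rfl⟩ | ⟨a, ha, rfl⟩
  · have hst : S.le s t := by
      rcases hlt with hlt | hlt
      · exact hlt.1
      · exact hσ.1.le_of_map_le hS hx (hx'x hsx') (hx'x ht) (ccLeChar_of_le hA hlt.1)
    exact ⟨t, ⟨ht, fun htP => hs (mem_posDownClosure_of_le hS htP hst)⟩, rfl⟩
  · rcases hlt with hlt | hlt
    · exact hlt.1.elim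
    · obtain ⟨c, hc, hsc, hca⟩ := ccLeChar_of_le hA hlt.1
      obtain ⟨u, hu, rfl⟩ := (hσ.1.1 x hx).2.2 a ha c hca
      exact (hs ⟨u, hu, (hσ.2 u).symm.trans hc,
        hσ.1.le_of_map_le hS hx (hx'x hsx') hu hsc⟩).elim

theorem subset_posDownClosure_of_maxVis (hA : A.toES.IsES) (hS : S.toES.IsES)
    (hσ : IsPreStrategy S A σ) (hx : S.toES.Config x) {x' : Set S.Evt} (hx'x : x' ⊆ x)
    (hx' : S.toES.Config x') (hmax : MaxVis A S σ (ccGraph A S σ x' (σ '' x))) :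
    x' ⊆ posDownClosure S x := by
  by_contra hsub
  obtain ⟨s, hs, hsP⟩ := Set.not_subset.1 hsub
  let inlEvent : S.Evt → (S.Evt ⊕ A.Evt) × (A.Evt ⊕ A.Evt) :=
    fun t => (Sum.inl t, Sum.inl (σ t))
  obtain ⟨_, ⟨t, ⟨ht, -⟩, rfl⟩, htop⟩ := exists_forall_reflTransGen_eq_of_rank_lt
    (r := gRel (S.toES.par A.toES) (CC A).toES (ccGraph A S σ x' (σ '' x)))
    (fun p => ccRank σ x p.2) (fun _ _ => ccRank_lt_of_gRel_ccGraph hA hS hσ.1 hx hx'x)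
    (hx'.1.sdiff.image inlEvent) ⟨_, s, ⟨hs, hsP⟩, rfl⟩ (by
      rintro _ ⟨t, ⟨ht, htP⟩, rfl⟩ q hq
      obtain ⟨u, hu, rfl⟩ :=
        exists_ccGraph_succ_of_notMem_posDownClosure hA hS hσ hx hx'x ht htP hq
      exact ⟨u, hu, rfl⟩)
  obtain ⟨a, ha⟩ := hmax _ (mem_ccGraph.2 (Or.inl ⟨t, ht, rfl⟩)) fun q _ hq => htop q hq
  exact Sum.inl_ne_inr ha

end Witness

/-- for `x ∈ C(S)` there is a unique `x* ⊆ x`, namely the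
down-closure `[x⁺]` of the positive events of `x`, such that `(x*, σ x)`
corresponds via `Ψ` to a configuration of `CC_A ⊛ S` all of whose maximal
events are visible. -/
theorem unique_minimal_witness
    (A S : ESP) (hA : A.toES.IsES) (hS : S.toES.IsES)
    (σ : S.Evt → A.Evt) (hσ : IsPreStrategy S A σ)
    (x : Set S.Evt) (hx : S.toES.Config x) :
    (({s | ∃ s' ∈ x, S.pol s' = true ∧ S.le s s'} : Set S.Evt) ⊆ x ∧
     S.toES.Config {s | ∃ s' ∈ x, S.pol s' = true ∧ S.le s s'} ∧
     IsSecBij (S.toES.par A.toES) (CC A).toES (A.toES.par A.toES)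
       (Sum.map σ id) id
       (ccGraph A S σ {s | ∃ s' ∈ x, S.pol s' = true ∧ S.le s s'} (σ '' x)) ∧
     MaxVis A S σ
       (ccGraph A S σ {s | ∃ s' ∈ x, S.pol s' = true ∧ S.le s s'} (σ '' x))) ∧
    ∀ x' : Set S.Evt, x' ⊆ x → S.toES.Config x' →
      IsSecBij (S.toES.par A.toES) (CC A).toES (A.toES.par A.toES)
        (Sum.map σ id) id (ccGraph A S σ x' (σ '' x)) →
      MaxVis A S σ (ccGraph A S σ x' (σ '' x)) →
      x' = {s | ∃ s' ∈ x, S.pol s' = true ∧ S.le s s'} := by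
  have hsub : posDownClosure S x ⊆ x := posDownClosure_subset hx
  have hconf : S.toES.Config (posDownClosure S x) := posDownClosure_config hS hx
  refine ⟨⟨hsub, hconf, ?_, maxVis_ccGraph_posDownClosure hS hσ⟩, ?_⟩
  · exact ccGraph_isSecBij hA hS hσ.1 hx hsub hconf (pos_mem_image_posDownClosure hS hσ)
  · intro x' hx'x hx' hsec hmax
    exact (subset_posDownClosure_of_maxVis hA hS hσ hx hx'x hx' hmax).antisymm
      (posDownClosure_subset_of_isSecBij hσ hx hx'x hx' hsec)
end

section
/- Let σ : S → A be a pre-strategy, let z, z' ∈ C(CC_A ⊙ S), and let (x, y), (x', y') ∈ C(S) × C(A) be the representations via Ψ of their minimal witnesses in C(CC_A ⊛ S). Then z ⊑_{CC_A ⊙ S} z' (Scott order on the composition, whose polarities are inherited from the right-hand copy of A) if and only if y ⊑_A y' and x ⊆ x'. -/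
/-- Visibility of an event of `CC_A ⊛ S`: its top synchronised pair projects
to the right-hand copy of `A`. -/
def ccVis (A S : ESP) (σ : S.Evt → A.Evt) (G : (ccInterES A S σ).Evt) : Prop :=
  ∃ a : A.Evt,
    ((Sum.inr a, Sum.inr a) : (S.Evt ⊕ A.Evt) × (A.Evt ⊕ A.Evt)) ∈ G.val ∧
    ∀ q ∈ G.val, Relation.ReflTransGen
      (gRel (S.toES.par A.toES) (CC A).toES G.val) q (Sum.inr a, Sum.inr a)

/-- The composition `CC_A ⊙ S`: the projection of `CC_A ⊛ S` to its visible
events. -/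
def ccCompES (A S : ESP) (σ : S.Evt → A.Evt) : ES :=
  (ccInterES A S σ).proj {G | ccVis A S σ G}

/-- The labelling map `ccc_A ⊙ σ : CC_A ⊙ S → A` of the composition. -/
noncomputable def ccCompLabel (A S : ESP) (σ : S.Evt → A.Evt)
    (G : (ccCompES A S σ).Evt) : A.Evt :=
  Exists.choose (G.prop : ccVis A S σ G.val)

/-- The composition `CC_A ⊙ S` as an esp, with polarities inherited from the
right-hand copy of `A`. -/
noncomputable def ccCompESP (A S : ESP) (σ : S.Evt → A.Evt) : ESP where
  toES := ccCompES A S σ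
  pol := fun G => A.pol (ccCompLabel A S σ G)

/-- The union of the graphs of the events of the minimal witness
`[z] ∈ C(CC_A ⊛ S)` of a configuration `z ∈ C(CC_A ⊙ S)`. -/
def ccWitUnion (A S : ESP) (σ : S.Evt → A.Evt)
    (z : Set (ccCompES A S σ).Evt) :
    Set ((S.Evt ⊕ A.Evt) × (A.Evt ⊕ A.Evt)) :=
  ⋃ H ∈ {H : (ccInterES A S σ).Evt | ∃ G ∈ z, H.val ⊆ G.val.val}, H.val

/-- The `C(S)` component `y_S` of the representation via `Ψ` of the minimal
witness of `z ∈ C(CC_A ⊙ S)`. -/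
def ccWitS (A S : ESP) (σ : S.Evt → A.Evt)
    (z : Set (ccCompES A S σ).Evt) : Set S.Evt :=
  Sum.inl ⁻¹' (Prod.fst '' ccWitUnion A S σ z)

/-- The `C(A)` component `y_A` of the representation via `Ψ` of the minimal
witness of `z ∈ C(CC_A ⊙ S)`. -/
def ccWitA (A S : ESP) (σ : S.Evt → A.Evt)
    (z : Set (ccCompES A S σ).Evt) : Set A.Evt :=
  Sum.inr ⁻¹' (Prod.fst '' ccWitUnion A S σ z)

/-!
The minimal witness of `z` is a secured bijection `W` whose pairs are `(s, σ s)` for `s ∈ x` and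
the visible pairs `(a, a)` for `a ∈ y`. The events of `z` are exactly the down-closures in `W` of
the visible pairs, labelled by their tops, so `z` corresponds to `y` and the polarity conditions
of the two Scott orders match. Copycat lets a hidden event of `S` reach the right copy of `A` only
through a positive event, so every `s ∈ x` lies below a positive event of `z`; since `z ⊑ z'` only
drops negative events, `x ⊆ x'`. Conversely, when `x ⊆ x'`, injectivity of `σ` on `x'` makes the
down-closures of a common visible pair in the two witnesses agree, so an event of `z` whose label
lies in `y'` is an event of `z'`.
-/

open Relation

theorem scottLE_iff {α : Type} (pol : α → Bool) (x y : Set α) :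
    scottLE pol x y ↔
      (∀ a ∈ x, a ∉ y → pol a = false) ∧ ∀ a ∈ y, a ∉ x → pol a = true := by
  constructor
  · rintro ⟨⟨-, hneg⟩, -, hpos⟩
    exact ⟨fun a ha hay => hneg a ha fun h => hay h.2, fun a ha hax => hpos a ha fun h => hax h.1⟩
  · rintro ⟨hneg, hpos⟩
    exact ⟨⟨Set.inter_subset_left, fun a ha h => hneg a ha fun hy => h ⟨ha, hy⟩⟩,
      Set.inter_subset_right, fun a ha h => hpos a ha fun hx => h ⟨hx, ha⟩⟩

namespace ES

theorem par_le_cases {E F : ES} {p q : (E.par F).Evt} (h : (E.par F).le p q) :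
    (∃ a b, p = Sum.inl a ∧ q = Sum.inl b ∧ E.le a b) ∨
      ∃ a b, p = Sum.inr a ∧ q = Sum.inr b ∧ F.le a b := by
  rcases p with a | a <;> rcases q with b | b
  · exact .inl ⟨a, b, rfl, rfl, h⟩
  · exact h.elim
  · exact h.elim
  · exact .inr ⟨a, b, rfl, rfl, h⟩

theorem Config.preimage {E F : ES} {f : E.Evt → F.Evt} (hf : f.Injective)
    (hle : ∀ a b, E.le a b → F.le (f a) (f b)) (hcon : ∀ Y, f '' Y ∈ F.Con → Y ∈ E.Con)
    {X : Set F.Evt} (hX : F.Config X) : E.Config (f ⁻¹' X) :=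
  ⟨hX.1.preimage hf.injOn,
    fun Y hY hYf => hcon Y (hX.2.1 _ (Set.image_subset_iff.2 hY) (hYf.image f)),
    fun _ he _ h => hX.2.2 _ he _ (hle _ _ h)⟩

theorem Config.preimage_inl {E F : ES} {X : Set (E.par F).Evt} (hX : (E.par F).Config X) :
    E.Config (Sum.inl ⁻¹' X) :=
  Config.preimage (F := E.par F) (f := Sum.inl) Sum.inl_injective (fun _ _ h => h) (fun Y hY => by
    convert hY.1; exact (Set.preimage_image_eq Y Sum.inl_injective).symm) hX

end ES

section gRel

variable {S T : ES} {G H : Set (S.Evt × T.Evt)}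

theorem gRel_mono (hGH : G ⊆ H) {p q : S.Evt × T.Evt} (h : gRel S T G p q) : gRel S T H p q :=
  ⟨hGH h.1, hGH h.2.1, h.2.2⟩

theorem reflTransGen_gRel_mono (hGH : G ⊆ H) {p q : S.Evt × T.Evt}
    (h : ReflTransGen (gRel S T G) p q) : ReflTransGen (gRel S T H) p q :=
  ReflTransGen.mono (fun _ _ => gRel_mono hGH) _ _ h

theorem reflTransGen_gRel_restrict (hH : ∀ p q, gRel S T G p q → q ∈ H → p ∈ H)
    {p t : S.Evt × T.Evt} (ht : t ∈ H) (h : ReflTransGen (gRel S T G) p t) :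
    p ∈ H ∧ ReflTransGen (gRel S T H) p t := by
  induction h using ReflTransGen.head_induction_on with
  | refl => exact ⟨ht, .refl⟩
  | head hpq _ ih =>
    have hp := hH _ _ hpq ih.1
    exact ⟨hp, ih.2.head ⟨hp, ih.1, hpq.2.2⟩⟩

theorem gRel_closed_of_config (hfst : S.Config (Prod.fst '' H)) (hsnd : T.Config (Prod.snd '' H))
    (hmem₁ : ∀ p ∈ G, p.1 ∈ Prod.fst '' H → p ∈ H) (hmem₂ : ∀ p ∈ G, p.2 ∈ Prod.snd '' H → p ∈ H) :
    ∀ p q, gRel S T G p q → q ∈ H → p ∈ H := by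
  rintro p q ⟨hp, -, h | h⟩ hq
  · exact hmem₁ p hp (hfst.2.2 _ ⟨q, hq, rfl⟩ _ h.1)
  · exact hmem₂ p hp (hsnd.2.2 _ ⟨q, hq, rfl⟩ _ h.1)

variable (S T) in
def gDownset (G : Set (S.Evt × T.Evt)) (t : S.Evt × T.Evt) : Set (S.Evt × T.Evt) :=
  {p | p ∈ G ∧ ReflTransGen (gRel S T G) p t}

theorem gDownset_subset (t : S.Evt × T.Evt) : gDownset S T G t ⊆ G := fun _ hp => hp.1

theorem gRel_closed_gDownset (t : S.Evt × T.Evt) :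
    ∀ p q, gRel S T G p q → q ∈ gDownset S T G t → p ∈ gDownset S T G t :=
  fun _ _ hpq hq => ⟨hpq.1, hq.2.head hpq⟩

theorem isTop_gDownset {t : S.Evt × T.Evt} (ht : t ∈ G) :
    t ∈ gDownset S T G t ∧
      ∀ q ∈ gDownset S T G t, ReflTransGen (gRel S T (gDownset S T G t)) q t :=
  ⟨⟨ht, .refl⟩, fun _ hq =>
    (reflTransGen_gRel_restrict (gRel_closed_gDownset t) ⟨ht, .refl⟩ hq.2).2⟩

theorem config_fst_gDownset (hG : S.Config (Prod.fst '' G)) (t : S.Evt × T.Evt) :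
    S.Config (Prod.fst '' gDownset S T G t) := by
  refine ⟨hG.1.subset (Set.image_mono (gDownset_subset t)),
    fun Y hY hYf => hG.2.1 Y (hY.trans (Set.image_mono (gDownset_subset t))) hYf, ?_⟩
  rintro _ ⟨p, hp, rfl⟩ e he
  obtain ⟨q, hq, rfl⟩ := hG.2.2 _ ⟨p, hp.1, rfl⟩ e he
  by_cases hqp : q.1 = p.1
  · exact ⟨p, hp, hqp.symm⟩
  · exact ⟨q, gRel_closed_gDownset t q p ⟨hq, hp.1, .inl ⟨he, hqp⟩⟩ hp, rfl⟩

theorem config_snd_gDownset (hG : T.Config (Prod.snd '' G)) (t : S.Evt × T.Evt) :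
    T.Config (Prod.snd '' gDownset S T G t) := by
  refine ⟨hG.1.subset (Set.image_mono (gDownset_subset t)),
    fun Y hY hYf => hG.2.1 Y (hY.trans (Set.image_mono (gDownset_subset t))) hYf, ?_⟩
  rintro _ ⟨p, hp, rfl⟩ e he
  obtain ⟨q, hq, rfl⟩ := hG.2.2 _ ⟨p, hp.1, rfl⟩ e he
  by_cases hqp : q.2 = p.2
  · exact ⟨p, hp, hqp.symm⟩
  · exact ⟨q, gRel_closed_gDownset t q p ⟨hq, hp.1, .inr ⟨he, hqp⟩⟩ hp, rfl⟩

end gRel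

section Copycat

variable {A : ESP}

theorem cc_le_inr (hA : A.toES.IsES) {p : A.Evt ⊕ A.Evt} {b : A.Evt}
    (h : (CC A).le p (Sum.inr b)) :
    Sum.elim (fun c => ∃ d, A.pol d = true ∧ A.le c d ∧ A.le d b) (fun c => A.le c b) p := by
  induction h using ReflTransGen.head_induction_on with
  | refl => exact hA.1 b
  | head hpq _ ih =>
    rcases hpq with hpq | ⟨d, hd, rfl, rfl⟩ | ⟨d, -, rfl, rfl⟩
    · rcases ES.par_le_cases hpq with ⟨c, c', rfl, rfl, hc⟩ | ⟨c, c', rfl, rfl, hc⟩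
      · obtain ⟨d, hd, hcd, hdb⟩ := ih
        exact ⟨d, hd, hA.2.1 _ _ _ hc hcd, hdb⟩
      · exact hA.2.1 _ _ _ hc ih
    · exact ⟨d, hd, hA.1 d, ih⟩
    · obtain ⟨d', -, hdd', hd'b⟩ := ih
      exact hA.2.1 _ _ _ hdd' hd'b

theorem cc_inl_le_inr_iff (hA : A.toES.IsES) {c b : A.Evt} :
    (CC A).le (Sum.inl c) (Sum.inr b) ↔ ∃ d, A.pol d = true ∧ A.le c d ∧ A.le d b := by
  refine ⟨cc_le_inr hA, fun ⟨d, hd, hcd, hdb⟩ => ?_⟩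
  exact ReflTransGen.head (Or.inl hcd : ccGen A (Sum.inl c) (Sum.inl d)) <|
    ReflTransGen.head (Or.inr (Or.inl ⟨d, hd, rfl, rfl⟩)) (.single (Or.inl hdb))

end Copycat

section Pullback

abbrev CCPair (A S : ESP) : Type := (S.Evt ⊕ A.Evt) × (A.Evt ⊕ A.Evt)

variable {A S : ESP} {σ : S.Evt → A.Evt}

abbrev ccRel (A S : ESP) (W : Set (CCPair A S)) : CCPair A S → CCPair A S → Prop :=
  gRel (S.toES.par A.toES) (CC A).toES W

abbrev ccDownset (A S : ESP) (W : Set (CCPair A S)) (t : CCPair A S) : Set (CCPair A S) :=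
  gDownset (S.toES.par A.toES) (CC A).toES W t

abbrev IsCCSecBij (σ : S.Evt → A.Evt) (W : Set (CCPair A S)) : Prop :=
  IsSecBij (S.toES.par A.toES) (CC A).toES (A.toES.par A.toES) (Sum.map σ id) id W

namespace IsCCSecBij

variable {W W' : Set (CCPair A S)}

theorem snd_eq (hW : IsCCSecBij σ W) {p : CCPair A S} (hp : p ∈ W) :
    p.2 = Sum.map σ id p.1 :=
  (hW.2.2.1 p hp).symm

theorem mk_mem (hW : IsCCSecBij σ W) {e : S.Evt ⊕ A.Evt} (he : e ∈ Prod.fst '' W) :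
    (e, Sum.map σ id e) ∈ W := by
  obtain ⟨p, hp, rfl⟩ := he
  rwa [← hW.snd_eq hp]

theorem mem_cases (hW : IsCCSecBij σ W) {p : CCPair A S} (hp : p ∈ W) :
    (∃ s, p = (Sum.inl s, Sum.inl (σ s))) ∨ ∃ a, p = (Sum.inr a, Sum.inr a) := by
  obtain ⟨e | a, f⟩ := p <;> have h := hW.snd_eq hp <;>
    simp only [Sum.map_inl, Sum.map_inr, id] at h <;> subst h
  · exact .inl ⟨e, rfl⟩
  · exact .inr ⟨a, rfl⟩

theorem mem_of_fst_mem (hW : IsCCSecBij σ W) (hW' : IsCCSecBij σ W')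
    {p : CCPair A S} (hp : p ∈ W) (h : p.1 ∈ Prod.fst '' W') : p ∈ W' := by
  rw [← Prod.mk.eta (p := p), hW.snd_eq hp]
  exact hW'.mk_mem h

theorem of_subset (hW : IsCCSecBij σ W) (hW'W : W' ⊆ W)
    (h₁ : (S.toES.par A.toES).Config (Prod.fst '' W')) (h₂ : (CC A).toES.Config (Prod.snd '' W')) :
    IsCCSecBij σ W' := by
  refine ⟨h₁, h₂, fun p hp => hW.2.2.1 p (hW'W hp), ?_, ?_, fun p q hpq hqp =>
    hW.2.2.2.2.2 p q (reflTransGen_gRel_mono hW'W hpq) (reflTransGen_gRel_mono hW'W hqp)⟩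
  · rintro _ ⟨p, hp, rfl⟩ _ ⟨q, hq, rfl⟩ h
    rwa [show (p.1, q.2) = p from Prod.ext rfl (h.symm.trans (hW.snd_eq (hW'W hp)).symm)]
  · calc Sum.map σ id '' (Prod.fst '' W') = (fun p => Sum.map σ id p.1) '' W' := Set.image_image ..
      _ = Prod.snd '' W' := Set.image_congr fun p hp => (hW.snd_eq (hW'W hp)).symm
      _ = id '' (Prod.snd '' W') := (Set.image_id _).symm

theorem ccDownset (hW : IsCCSecBij σ W) (t : CCPair A S) :
    IsCCSecBij σ (ccDownset A S W t) :=
  hW.of_subset (fun _ hp => hp.1) (config_fst_gDownset hW.1 t) (config_snd_gDownset hW.2.1 t)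

/-- A `◁`-predecessor in `W` of a pair of `W'` shares a component with a pair of `W'`, as
configurations are down-closed; `hinj` makes the two pairs equal. -/
theorem mem_of_reflTransGen (hW : IsCCSecBij σ W) (hW' : IsCCSecBij σ W')
    (hinj : ∀ s u, (Sum.inl s, Sum.inl (σ s)) ∈ W → (Sum.inl u, Sum.inl (σ u)) ∈ W' →
      σ s = σ u → s = u)
    {p t : CCPair A S} (ht : t ∈ W') (h : ReflTransGen (ccRel A S W) p t) :
    p ∈ W' := by
  refine (reflTransGen_gRel_restrict (gRel_closed_of_config hW'.1 hW'.2.1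
    (fun p hp => hW.mem_of_fst_mem hW' hp) ?_) ht h).1
  rintro p hp ⟨q, hq, hpq⟩
  rcases hW.mem_cases hp with ⟨s, rfl⟩ | ⟨a, rfl⟩ <;>
    rcases hW'.mem_cases hq with ⟨u, rfl⟩ | ⟨b, rfl⟩
  · obtain rfl := hinj s u hp hq (Sum.inl_injective hpq).symm
    exact hq
  · cases hpq
  · cases hpq
  · obtain rfl := Sum.inr_injective hpq
    exact hq

theorem exists_pos_of_reflTransGen (hA : A.toES.IsES) (hW : IsCCSecBij σ W)
    {p : CCPair A S} {a : A.Evt}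
    (h : ReflTransGen (ccRel A S W) p (Sum.inr a, Sum.inr a)) :
    (∃ b, p = (Sum.inr b, Sum.inr b)) ∨
      ∃ d, A.pol d = true ∧ (Sum.inr d, Sum.inr d) ∈ W ∧
        ReflTransGen (ccRel A S W) p (Sum.inr d, Sum.inr d) := by
  induction h using ReflTransGen.head_induction_on with
  | refl => exact .inl ⟨a, rfl⟩
  | head hpq _ ih =>
    rcases ih with ⟨b, rfl⟩ | ⟨d, hd, hdW, hqd⟩
    · obtain ⟨hp, hq, hlt⟩ := hpq
      rcases hW.mem_cases hp with ⟨s, rfl⟩ | ⟨c, rfl⟩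
      · obtain hlt | hlt := hlt
        · exact (hlt.1 : False).elim
        obtain ⟨d, hd, hsd, hdb⟩ := (cc_inl_le_inr_iff hA).1 hlt.1
        have hdW : (Sum.inr d, Sum.inr d) ∈ W :=
          hW.mk_mem (hW.1.2.2 _ ⟨_, hq, rfl⟩ (Sum.inr d) hdb)
        refine .inr ⟨d, hd, hdW, .single ⟨hp, hdW, .inr ⟨?_, Sum.inl_ne_inr⟩⟩⟩
        exact (cc_inl_le_inr_iff hA).2 ⟨d, hd, hsd, hA.1 d⟩
      · exact .inl ⟨c, rfl⟩
    · exact .inr ⟨d, hd, hdW, hqd.head hpq⟩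

end IsCCSecBij

end Pullback

section Composition

variable {A S : ESP} {σ : S.Evt → A.Evt} {z z' : Set (ccCompES A S σ).Evt}

theorem mem_ccWitUnion {p : CCPair A S} :
    p ∈ ccWitUnion A S σ z ↔ ∃ G ∈ z, p ∈ G.val.val := by
  constructor
  · intro hp
    obtain ⟨H, ⟨G, hG, hHG⟩, hp⟩ := Set.mem_iUnion₂.1 hp
    exact ⟨G, hG, hHG hp⟩
  · rintro ⟨G, hG, hp⟩
    exact Set.mem_iUnion₂.2 ⟨G.val, ⟨G, hG, subset_rfl⟩, hp⟩

theorem subset_ccWitUnion {G : (ccCompES A S σ).Evt} (hG : G ∈ z) :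
    G.val.val ⊆ ccWitUnion A S σ z :=
  fun _ hp => mem_ccWitUnion.2 ⟨G, hG, hp⟩

theorem isCCSecBij_ccWitUnion (hz : (ccCompES A S σ).Config z) :
    IsCCSecBij σ (ccWitUnion A S σ z) := by
  have h : ccWitUnion A S σ z = ⋃ G ∈ Subtype.val '' z, G.val := by
    ext p
    refine mem_ccWitUnion.trans ⟨fun ⟨G, hG, hp⟩ => Set.mem_iUnion₂.2 ⟨G.val, ⟨G, hG, rfl⟩, hp⟩,
      fun hp => ?_⟩
    obtain ⟨_, ⟨G, hG, rfl⟩, hp⟩ := Set.mem_iUnion₂.1 hp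
    exact ⟨G, hG, hp⟩
  exact (congrArg (IsCCSecBij σ) h).mpr (hz.2.1 z subset_rfl hz.1).2

theorem mem_ccWitS (hz : (ccCompES A S σ).Config z) {s : S.Evt} :
    s ∈ ccWitS A S σ z ↔ (Sum.inl s, Sum.inl (σ s)) ∈ ccWitUnion A S σ z :=
  ⟨(isCCSecBij_ccWitUnion hz).mk_mem, fun h => ⟨_, h, rfl⟩⟩

theorem mem_ccWitA (hz : (ccCompES A S σ).Config z) {a : A.Evt} :
    a ∈ ccWitA A S σ z ↔ (Sum.inr a, Sum.inr a) ∈ ccWitUnion A S σ z :=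
  ⟨(isCCSecBij_ccWitUnion hz).mk_mem, fun h => ⟨_, h, rfl⟩⟩

theorem injOn_ccWitS (hσ : IsPreStrategy S A σ) (hz : (ccCompES A S σ).Config z) :
    Set.InjOn σ (ccWitS A S σ z) :=
  hσ.1.2 _ (isCCSecBij_ccWitUnion hz).1.preimage_inl

theorem ccCompLabel_spec (G : (ccCompES A S σ).Evt) :
    (Sum.inr (ccCompLabel A S σ G), Sum.inr (ccCompLabel A S σ G)) ∈ G.val.val ∧
      ∀ q ∈ G.val.val, ReflTransGen (ccRel A S G.val.val) q
        (Sum.inr (ccCompLabel A S σ G), Sum.inr (ccCompLabel A S σ G)) :=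
  Exists.choose_spec G.prop

theorem ccCompLabel_eq {G : (ccCompES A S σ).Evt} {a : A.Evt}
    (ha : (Sum.inr a, Sum.inr a) ∈ G.val.val)
    (htop : ∀ q ∈ G.val.val, ReflTransGen (ccRel A S G.val.val) q (Sum.inr a, Sum.inr a)) :
    ccCompLabel A S σ G = a := by
  obtain ⟨hl, hltop⟩ := ccCompLabel_spec G
  exact Sum.inr_injective (congrArg Prod.snd (G.val.prop.1.2.2.2.2.2 _ _ (htop _ hl) (hltop _ ha)))

theorem ccCompLabel_mem_ccWitA {G : (ccCompES A S σ).Evt} (hG : G ∈ z) :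
    ccCompLabel A S σ G ∈ ccWitA A S σ z :=
  ⟨_, subset_ccWitUnion hG (ccCompLabel_spec G).1, rfl⟩

/-- The top of `K` lies in some `G ∈ z`, and `G` is downward closed in the witness because `σ` is
injective on `ccWitS z`. -/
theorem mem_of_subset_ccWitUnion (hσ : IsPreStrategy S A σ) (hz : (ccCompES A S σ).Config z)
    {K : (ccCompES A S σ).Evt} (hK : K.val.val ⊆ ccWitUnion A S σ z) : K ∈ z := by
  have hW := isCCSecBij_ccWitUnion hz
  obtain ⟨hKtop, hKbelow⟩ := ccCompLabel_spec K
  obtain ⟨G, hG, hKG⟩ := mem_ccWitUnion.1 (hK hKtop)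
  obtain ⟨hGtop, hGbelow⟩ := ccCompLabel_spec G
  refine hz.2.2 G hG K fun q hq => hW.mem_of_reflTransGen G.val.prop.1 ?_ hGtop ?_
  · exact fun s u hs hu =>
      injOn_ccWitS hσ hz ((mem_ccWitS hz).2 hs) ((mem_ccWitS hz).2 (subset_ccWitUnion hG hu))
  · exact (reflTransGen_gRel_mono hK (hKbelow q hq)).trans
      (reflTransGen_gRel_mono (subset_ccWitUnion hG) (hGbelow _ hKG))

theorem mem_of_ccCompLabel_mem (hσ : IsPreStrategy S A σ) (hz : (ccCompES A S σ).Config z)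
    (hz' : (ccCompES A S σ).Config z')
    (hinj : ∀ s ∈ ccWitS A S σ z, ∀ u ∈ ccWitS A S σ z', σ s = σ u → s = u)
    {G : (ccCompES A S σ).Evt} (hG : G ∈ z) (ha : ccCompLabel A S σ G ∈ ccWitA A S σ z') :
    G ∈ z' :=
  mem_of_subset_ccWitUnion hσ hz' fun q hq =>
    (isCCSecBij_ccWitUnion hz).mem_of_reflTransGen (isCCSecBij_ccWitUnion hz')
      (fun s u hs hu => hinj s ((mem_ccWitS hz).2 hs) u ((mem_ccWitS hz').2 hu))
      ((mem_ccWitA hz').1 ha)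
      (reflTransGen_gRel_mono (subset_ccWitUnion hG) ((ccCompLabel_spec G).2 q hq))

theorem exists_ccCompLabel_eq (hσ : IsPreStrategy S A σ) (hz : (ccCompES A S σ).Config z)
    {a : A.Evt} (ha : a ∈ ccWitA A S σ z) :
    ∃ K ∈ z, ccCompLabel A S σ K = a ∧
      K.val.val = ccDownset A S (ccWitUnion A S σ z) (Sum.inr a, Sum.inr a) := by
  have hD := isTop_gDownset (S := S.toES.par A.toES) (T := (CC A).toES) ((mem_ccWitA hz).1 ha)
  let K : (ccCompES A S σ).Evt :=
    ⟨⟨_, (isCCSecBij_ccWitUnion hz).ccDownset _, _, hD⟩, _, hD⟩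
  exact ⟨K, mem_of_subset_ccWitUnion hσ hz fun _ hp => hp.1, ccCompLabel_eq hD.1 hD.2, rfl⟩

theorem exists_mem_not_mem_ccCompLabel_eq (hσ : IsPreStrategy S A σ)
    (hz : (ccCompES A S σ).Config z) {a : A.Evt} (ha : a ∈ ccWitA A S σ z)
    (ha' : a ∉ ccWitA A S σ z') : ∃ K ∈ z, K ∉ z' ∧ ccCompLabel A S σ K = a := by
  obtain ⟨K, hK, rfl, -⟩ := exists_ccCompLabel_eq hσ hz ha
  exact ⟨K, hK, fun hK' => ha' (ccCompLabel_mem_ccWitA hK'), rfl⟩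

/-- Every event of `ccWitS z` lies below a positive visible event of `z`, which `z ⊇⁻ z ∩ z'`
cannot drop. -/
theorem ccWitS_subset_of_neg (hA : A.toES.IsES) (hσ : IsPreStrategy S A σ)
    (hz : (ccCompES A S σ).Config z)
    (hneg : ∀ K ∈ z, K ∉ z' → A.pol (ccCompLabel A S σ K) = false) :
    ccWitS A S σ z ⊆ ccWitS A S σ z' := by
  intro s hs
  obtain ⟨G, hG, hsG⟩ := mem_ccWitUnion.1 ((mem_ccWitS hz).1 hs)
  rcases (isCCSecBij_ccWitUnion hz).exists_pos_of_reflTransGen hA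
      (reflTransGen_gRel_mono (subset_ccWitUnion hG) ((ccCompLabel_spec G).2 _ hsG)) with
    ⟨b, hb⟩ | ⟨d, hd, hdW, hsd⟩
  · simp at hb
  obtain ⟨K, hK, hKd, hKval⟩ := exists_ccCompLabel_eq hσ hz ((mem_ccWitA hz).2 hdW)
  have hK' : K ∈ z' := by
    by_contra hK'
    simpa [hKd, hd] using hneg K hK hK'
  have hsK : (Sum.inl s, Sum.inl (σ s)) ∈ K.val.val := by
    rw [hKval]
    exact ⟨(mem_ccWitS hz).1 hs, hsd⟩
  exact ⟨_, subset_ccWitUnion hK' hsK, rfl⟩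

end Composition

theorem scott_order_on_copycat_composition_general
    (A S : ESP) (hA : A.toES.IsES)
    (σ : S.Evt → A.Evt) (hσ : IsPreStrategy S A σ)
    (z z' : Set (ccCompES A S σ).Evt)
    (hz : (ccCompES A S σ).Config z) (hz' : (ccCompES A S σ).Config z') :
    scottLE (ccCompESP A S σ).pol z z' ↔
      (scottLE A.pol (ccWitA A S σ z) (ccWitA A S σ z') ∧
       ccWitS A S σ z ⊆ ccWitS A S σ z') := by
  refine (scottLE_iff _ z z').trans ?_
  rw [scottLE_iff]
  constructor
  · rintro ⟨hneg, hpos⟩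
    refine ⟨⟨fun a ha ha' => ?_, fun a ha' ha => ?_⟩, ccWitS_subset_of_neg hA hσ hz hneg⟩
    · obtain ⟨K, hK, hK', rfl⟩ := exists_mem_not_mem_ccCompLabel_eq hσ hz ha ha'
      exact hneg K hK hK'
    · obtain ⟨K, hK', hK, rfl⟩ := exists_mem_not_mem_ccCompLabel_eq hσ hz' ha' ha
      exact hpos K hK' hK
  · rintro ⟨⟨hyneg, hypos⟩, hxx⟩
    have hinj := injOn_ccWitS hσ hz'
    refine ⟨fun G hG hG' => hyneg _ (ccCompLabel_mem_ccWitA hG) fun ha' => ?_,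
      fun G hG' hG => hypos _ (ccCompLabel_mem_ccWitA hG') fun ha => ?_⟩
    · exact hG' (mem_of_ccCompLabel_mem hσ hz hz' (fun s hs u hu => hinj (hxx hs) hu) hG ha')
    · exact hG (mem_of_ccCompLabel_mem hσ hz' hz (fun s hs u hu => hinj hs (hxx hu)) hG' ha)

/-- for configurations `z, z'` of `CC_A ⊙ S` with minimal
witnesses represented by `(x, y)` and `(x', y')`, one has
`z ⊑_{CC_A ⊙ S} z'` iff `y ⊑_A y'` and `x ⊆ x'`. -/
theorem scott_order_on_copycat_composition
    (A S : ESP) (hA : A.toES.IsES) (hS : S.toES.IsES)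
    (σ : S.Evt → A.Evt) (hσ : IsPreStrategy S A σ)
    (z z' : Set (ccCompES A S σ).Evt)
    (hz : (ccCompES A S σ).Config z) (hz' : (ccCompES A S σ).Config z') :
    scottLE (ccCompESP A S σ).pol z z' ↔
      (scottLE A.pol (ccWitA A S σ z) (ccWitA A S σ z') ∧
       ccWitS A S σ z ⊆ ccWitS A S σ z') :=
  scott_order_on_copycat_composition_general A S hA σ hσ z z' hz hz'
end
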